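/- arXiv:0711.0690 — 3 statements merged into one kernel-verified Lean document; each statement's English description precedes it below -/
import Mathlib

section
/- Let I_l, I_c, I_r be three intervals from the family with I_l to the left of I_c and I_r to the right of I_c. If (1/|I_c|)Σ_{t_i∈I_c} y(t_i) − σ√(3 log n)/√|I_c| ≥ max{ (1/|I_l|)Σ_{t_i∈I_l} y(t_i) + σ√(3 log n)/√|I_l|, (1/|I_r|)Σ_{t_i∈I_r} y(t_i) + σ√(3 log n)/√|I_r| } holds strictly, then every function g in A_n attains a local maximum over the design points in I_l ∪ I_c ∪ I_r, in the sense that there exist design points s ∈ I_l, t ∈ I_c, u ∈ I_r with s < t < u, g(t) > g(s) and g(t) > g(u). -/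
/-!
Membership in `A_n` keeps the mean of `g` over each interval of the family within the noise
margin `σ √(3 log n) / √|I|` of the mean of the data, so the gap hypothesis forces the mean of
`g` over `I_c` above its means over `I_l` and `I_r`. A point of `I_c` where `g` is at least its
mean there, together with points of `I_l` and `I_r` where `g` is at most its means there, is the
required local maximum.
-/

open Finset BigOperators

lemma abs_expect_sub_expect_le {ι : Type*} (I : Finset ι) (f g : ι → ℝ) {r : ℝ}
    (h : |∑ i ∈ I, (f i - g i)| ≤ r * √I.card) :
    |𝔼 i ∈ I, f i - 𝔼 i ∈ I, g i| ≤ r / √I.card := by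
  rw [← expect_sub_distrib, expect_eq_sum_div_card, abs_div, Nat.abs_cast]
  calc |∑ i ∈ I, (f i - g i)| / I.card ≤ r * √I.card / I.card := by gcongr
    _ = r / √I.card := by rw [mul_div_assoc, Real.sqrt_div_self', mul_one_div]

theorem stmt2_general (n : ℕ) (σ : ℝ)
    (y g : ℕ → ℝ) (𝓘 : Set (Finset ℕ))
    (hA : ∀ I ∈ 𝓘, |∑ i ∈ I, (y i - g i)| ≤ σ * Real.sqrt (3 * Real.log n) * Real.sqrt I.card)
    (Il Ic Ir : Finset ℕ) (hIl : Il ∈ 𝓘) (hIc : Ic ∈ 𝓘) (hIr : Ir ∈ 𝓘)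
    (hl : Il.Nonempty) (hc : Ic.Nonempty) (hr : Ir.Nonempty)
    (hlc : ∀ s ∈ Il, ∀ t ∈ Ic, s < t) (hcr : ∀ t ∈ Ic, ∀ u ∈ Ir, t < u)
    (hgap :
      (∑ i ∈ Ic, y i) / Ic.card - σ * Real.sqrt (3 * Real.log n) / Real.sqrt Ic.card >
        max ((∑ i ∈ Il, y i) / Il.card + σ * Real.sqrt (3 * Real.log n) / Real.sqrt Il.card)
            ((∑ i ∈ Ir, y i) / Ir.card + σ * Real.sqrt (3 * Real.log n) / Real.sqrt Ir.card)) :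
    ∃ s ∈ Il, ∃ t ∈ Ic, ∃ u ∈ Ir, s < t ∧ t < u ∧ g s < g t ∧ g u < g t := by
  simp only [← expect_eq_sum_div_card, gt_iff_lt, max_lt_iff] at hgap
  have hdev (I) (hI : I ∈ 𝓘) := abs_le.1 (abs_expect_sub_expect_le I y g (hA I hI))
  have := hdev Il hIl
  have := hdev Ic hIc
  have := hdev Ir hIr
  obtain ⟨t, ht, hgt⟩ := exists_le_of_le_expect hc (le_refl (𝔼 i ∈ Ic, g i))
  obtain ⟨s, hs, hgs⟩ := exists_le_of_expect_le hl (le_refl (𝔼 i ∈ Il, g i))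
  obtain ⟨u, hu, hgu⟩ := exists_le_of_expect_le hr (le_refl (𝔼 i ∈ Ir, g i))
  refine ⟨s, hs, t, ht, u, hu, hlc s hs t ht, hcr t ht u hu, ?_, ?_⟩ <;> linarith

/-- if the averaged data on a central interval exceeds (strictly) the
averaged data on flanking intervals by the noise margins, then every function `g` in
the confidence region `A_n` has a local maximum over the design points in
`I_l ∪ I_c ∪ I_r`. -/
theorem stmt2 (n : ℕ) (hn : 2 ≤ n) (σ : ℝ) (hσ : 0 < σ)
    (y g : ℕ → ℝ) (𝓘 : Set (Finset ℕ))
    (hA : ∀ I ∈ 𝓘, |∑ i ∈ I, (y i - g i)| ≤ σ * Real.sqrt (3 * Real.log n) * Real.sqrt I.card)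
    (Il Ic Ir : Finset ℕ) (hIl : Il ∈ 𝓘) (hIc : Ic ∈ 𝓘) (hIr : Ir ∈ 𝓘)
    (hl : Il.Nonempty) (hc : Ic.Nonempty) (hr : Ir.Nonempty)
    (hlc : ∀ s ∈ Il, ∀ t ∈ Ic, s < t) (hcr : ∀ t ∈ Ic, ∀ u ∈ Ir, t < u)
    (hgap :
      (∑ i ∈ Ic, y i) / Ic.card - σ * Real.sqrt (3 * Real.log n) / Real.sqrt Ic.card >
        max ((∑ i ∈ Il, y i) / Il.card + σ * Real.sqrt (3 * Real.log n) / Real.sqrt Il.card)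
            ((∑ i ∈ Ir, y i) / Ir.card + σ * Real.sqrt (3 * Real.log n) / Real.sqrt Ir.card)) :
    ∃ s ∈ Il, ∃ t ∈ Ic, ∃ u ∈ Ir, s < t ∧ t < u ∧ g s < g t ∧ g u < g t :=
  stmt2_general n σ y g 𝓘 hA Il Ic Ir hIl hIc hIr hl hc hr hlc hcr hgap
end

section
/- Let g be nondecreasing on [0,1] and suppose g ∈ A_n where A_n includes all intervals of consecutive design points. Then for each design point t_i, g(t_i) ≥ max_{0 ≤ k ≤ i−1} [ (1/(k+1))Σ_{j=0}^{k} y(t_{i−j}) − σ√(3 log n/(k+1)) ] and g(t_i) ≤ min_{0 ≤ k ≤ n−i} [ (1/(k+1))Σ_{j=0}^{k} y(t_{i+j}) + σ√(3 log n/(k+1)) ]. -/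
/-!
Averaging the defining inequality of `A_n` over the block of `k + 1` design points ending
(resp. starting) at `t_i` bounds the block mean of `y` by the block mean of `g` up to
`σ √(3 log n / (k + 1))`, and by monotonicity the block mean of `g` is at most (resp. at least)
`g (t_i)`.
-/

open Finset

theorem sum_div_card_sub_le_of_abs_sum_sub_le {ι : Type*} {s : Finset ι} (hs : s.Nonempty)
    {x u : ι → ℝ} {c m : ℝ} (hdev : |∑ j ∈ s, (x j - u j)| ≤ c * √(#s : ℝ))
    (hm : ∀ j ∈ s, u j ≤ m) :
    (∑ j ∈ s, x j) / #s - c / √(#s : ℝ) ≤ m := by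
  have hN : (0 : ℝ) < #s := by exact_mod_cast hs.card_pos
  have hx : ∑ j ∈ s, x j ≤ c * √(#s : ℝ) + #s * m :=
    calc ∑ j ∈ s, x j = ∑ j ∈ s, (x j - u j) + ∑ j ∈ s, u j := by
          rw [← sum_add_distrib]; simp only [sub_add_cancel]
      _ ≤ c * √(#s : ℝ) + #s • m :=
          add_le_add ((le_abs_self _).trans hdev) (sum_le_card_nsmul _ _ _ hm)
      _ = c * √(#s : ℝ) + #s * m := by rw [nsmul_eq_mul]
  have hc : c / √(#s : ℝ) = c * √(#s : ℝ) / #s := by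
    rw [mul_div_assoc, Real.sqrt_div_self', mul_one_div]
  rw [hc, ← sub_div, div_le_iff₀ hN]
  linarith

theorem le_sum_div_card_add_of_abs_sum_sub_le {ι : Type*} {s : Finset ι} (hs : s.Nonempty)
    {x u : ι → ℝ} {c m : ℝ} (hdev : |∑ j ∈ s, (x j - u j)| ≤ c * √(#s : ℝ))
    (hm : ∀ j ∈ s, m ≤ u j) :
    m ≤ (∑ j ∈ s, x j) / #s + c / √(#s : ℝ) := by
  have h := sum_div_card_sub_le_of_abs_sum_sub_le (x := -x) (u := -u) (m := -m) hs
    (by simpa only [Pi.neg_apply, neg_sub_neg, sum_sub_distrib, abs_sub_comm] using hdev)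
    (fun j hj => neg_le_neg (hm j hj))
  simp only [Pi.neg_apply, sum_neg_distrib, neg_div] at h
  linarith

theorem sum_Icc_sub_eq_sum_range {M : Type*} [AddCommMonoid M] (f : ℕ → M) {i k : ℕ}
    (hk : k ≤ i) : ∑ j ∈ Icc (i - k) i, f j = ∑ j ∈ range (k + 1), f (i - j) := by
  rw [range_eq_Ico, sum_Ico_reflect f 0 (by omega), ← Ico_add_one_right_eq_Icc]
  congr 2; omega

theorem sum_Icc_add_eq_sum_range {M : Type*} [AddCommMonoid M] (f : ℕ → M) (i k : ℕ) :
    ∑ j ∈ Icc i (i + k), f j = ∑ j ∈ range (k + 1), f (i + j) := by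
  rw [← Ico_add_one_right_eq_Icc, sum_Ico_eq_sum_range, show i + k + 1 - i = k + 1 by omega]

theorem monotoneOn_comp_div_natCast {g : ℝ → ℝ} (hg : MonotoneOn g (Set.Icc 0 1)) (n : ℕ) :
    MonotoneOn (fun j : ℕ => g (j / n)) (Set.Iic n) := by
  have hmem : ∀ j ∈ Set.Iic n, (j : ℝ) / n ∈ Set.Icc (0 : ℝ) 1 := fun j hj =>
    ⟨by positivity, div_le_one_of_le₀ (by exact_mod_cast hj) n.cast_nonneg⟩
  intro a ha b hb hab
  exact hg (hmem a ha) (hmem b hb) (by gcongr)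

/-- Membership in `A_n`, with `u j` standing for `g (t_j)` and `c` for `σ √(3 log n)`. -/
def IntervalDeviationLE (n : ℕ) (c : ℝ) (y u : ℕ → ℝ) : Prop :=
  ∀ a b : ℕ, 1 ≤ a → a ≤ b → b ≤ n →
    |∑ j ∈ Icc a b, (y j - u j)| ≤ c * √((b : ℝ) - a + 1)

namespace IntervalDeviationLE

variable {n i k : ℕ} {c : ℝ} {y u : ℕ → ℝ}

theorem sum_range_sub_div_sub_le (h : IntervalDeviationLE n c y u)
    (hu : MonotoneOn u (Set.Iic n)) (hki : k + 1 ≤ i) (hin : i ≤ n) :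
    (∑ j ∈ range (k + 1), y (i - j)) / (k + 1) - c / √(k + 1) ≤ u i := by
  have hdev := h (i - k) i (by omega) (by omega) hin
  rw [sum_Icc_sub_eq_sum_range _ (by omega)] at hdev
  have hlen : (i : ℝ) - (i - k : ℕ) + 1 = #(range (k + 1)) := by
    push_cast [card_range, Nat.cast_sub (show k ≤ i by omega)]; ring
  rw [hlen] at hdev
  have hmean := sum_div_card_sub_le_of_abs_sum_sub_le nonempty_range_add_one hdev
    (fun j _ => hu (Set.mem_Iic.2 (by omega)) (Set.mem_Iic.2 hin) (Nat.sub_le i j))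
  simpa only [card_range, Nat.cast_add, Nat.cast_one] using hmean

theorem le_sum_range_add_div_add (h : IntervalDeviationLE n c y u)
    (hu : MonotoneOn u (Set.Iic n)) (hi : 1 ≤ i) (hkn : i + k ≤ n) :
    u i ≤ (∑ j ∈ range (k + 1), y (i + j)) / (k + 1) + c / √(k + 1) := by
  have hdev := h i (i + k) hi (by omega) hkn
  rw [sum_Icc_add_eq_sum_range] at hdev
  have hlen : ((i + k : ℕ) : ℝ) - i + 1 = #(range (k + 1)) := by
    push_cast [card_range]; ring
  rw [hlen] at hdev
  have hmean := le_sum_div_card_add_of_abs_sum_sub_le nonempty_range_add_one hdev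
    fun j hj => hu (Set.mem_Iic.2 (by omega)) (Set.mem_Iic.2 (by have := mem_range.1 hj; omega))
      (Nat.le_add_right i j)
  simpa only [card_range, Nat.cast_add, Nat.cast_one] using hmean

end IntervalDeviationLE

theorem stmt11_general (n : ℕ) (σ : ℝ)
    (y : ℕ → ℝ) (g : ℝ → ℝ) (hg : MonotoneOn g (Set.Icc (0 : ℝ) 1))
    (hA : ∀ a b : ℕ, 1 ≤ a → a ≤ b → b ≤ n →
      |∑ j ∈ Finset.Icc a b, (y j - g ((j : ℝ) / n))| ≤
        σ * Real.sqrt (3 * Real.log n) * Real.sqrt ((b : ℝ) - a + 1)) :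
    ∀ i : ℕ, 1 ≤ i → i ≤ n →
      (∀ k : ℕ, k ≤ i - 1 →
        g ((i : ℝ) / n) ≥
          (∑ j ∈ Finset.range (k + 1), y (i - j)) / (k + 1) -
            σ * Real.sqrt (3 * Real.log n / (k + 1))) ∧
      (∀ k : ℕ, k ≤ n - i →
        g ((i : ℝ) / n) ≤
          (∑ j ∈ Finset.range (k + 1), y (i + j)) / (k + 1) +
            σ * Real.sqrt (3 * Real.log n / (k + 1))) := by
  intro i hi hin
  have hA' : IntervalDeviationLE n (σ * √(3 * Real.log n)) y (fun j => g (j / n)) := hA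
  have hu := monotoneOn_comp_div_natCast hg n
  have hwidth (k : ℕ) : σ * √(3 * Real.log n / (k + 1)) = σ * √(3 * Real.log n) / √(k + 1) := by
    rw [Real.sqrt_div' _ (by positivity), mul_div_assoc]
  refine ⟨fun k hk => ?_, fun k hk => ?_⟩
  · rw [hwidth, ge_iff_le]
    exact hA'.sum_range_sub_div_sub_le hu (by omega) hin
  · rw [hwidth]
    exact hA'.le_sum_range_add_div_add hu hi (by omega)

/-- fast honest bounds for monotone functions: if `g` is nondecreasing on
`[0,1]` and belongs to `A_n` (all intervals of consecutive design points), then at each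
design point `t_i` the value `g(t_i)` lies above every left-block lower bound and below
every right-block upper bound. -/
theorem stmt11 (n : ℕ) (hn : 2 ≤ n) (σ : ℝ) (hσ : 0 < σ)
    (y : ℕ → ℝ) (g : ℝ → ℝ) (hg : MonotoneOn g (Set.Icc (0 : ℝ) 1))
    (hA : ∀ a b : ℕ, 1 ≤ a → a ≤ b → b ≤ n →
      |∑ j ∈ Finset.Icc a b, (y j - g ((j : ℝ) / n))| ≤
        σ * Real.sqrt (3 * Real.log n) * Real.sqrt ((b : ℝ) - a + 1)) :
    ∀ i : ℕ, 1 ≤ i → i ≤ n →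
      (∀ k : ℕ, k ≤ i - 1 →
        g ((i : ℝ) / n) ≥
          (∑ j ∈ Finset.range (k + 1), y (i - j)) / (k + 1) -
            σ * Real.sqrt (3 * Real.log n / (k + 1))) ∧
      (∀ k : ℕ, k ≤ n - i →
        g ((i : ℝ) / n) ≤
          (∑ j ∈ Finset.range (k + 1), y (i + j)) / (k + 1) +
            σ * Real.sqrt (3 * Real.log n / (k + 1))) :=
  stmt11_general n σ y g hg hA
end

section
/- Fast smoothness bounds are honest: if f is twice differentiable with ‖f''‖_∞ ≤ K and f ∈ A_n (with A_n containing all symmetric blocks of consecutive design points), then for every design point t_i, f(t_i) ≥ max_k [ (1/(2k+1))Σ_{j=−k}^{k} y(t_{i+j}) − (k/n)²K − σ√(3 log n/(2k+1)) ] and f(t_i) ≤ min_k [ (1/(2k+1))Σ_{j=−k}^{k} y(t_{i+j}) + (k/n)²K + σ√(3 log n/(2k+1)) ], where k ranges over 0 ≤ k ≤ min(i−1, n−i). -/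
/-! Applying the mean value theorem to `t ↦ f (a + t) + f (a - t)` shows that each pair of design
points placed symmetrically around `t_i` averages to `f t_i` up to `K (k/n)²`, hence so does the
whole block of `2k + 1` points. Dividing the `A_n` constraint by `2k + 1` bounds the distance
between the block averages of `y` and of `f` by `σ √(3 log n / (2k + 1))`. -/

open Finset

theorem abs_symmetric_second_difference_le {f : ℝ → ℝ} {K : ℝ} (hf : Differentiable ℝ f)
    (hf' : Differentiable ℝ (deriv f)) (hf'' : ∀ t, |deriv (deriv f) t| ≤ K) (a h : ℝ) :
    |f (a + h) + f (a - h) - 2 * f a| ≤ 2 * K * h ^ 2 := by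
  wlog hh : 0 ≤ h generalizing h
  · have := this (-h) (by linarith)
    rwa [neg_sq, ← sub_eq_add_neg, sub_neg_eq_add, add_comm (f (a - h))] at this
  have hK : 0 ≤ K := (abs_nonneg _).trans (hf'' 0)
  have hφ : ∀ t, HasDerivAt (fun t => f (a + t) + f (a - t))
      (deriv f (a + t) - deriv f (a - t)) t :=
    fun t => (((hf _).hasDerivAt.comp_const_add a t).add
      ((hf _).hasDerivAt.comp_const_sub a t)).congr_deriv (sub_eq_add_neg _ _).symm
  have hbound : ∀ t ∈ Set.Ico 0 h, ‖deriv f (a + t) - deriv f (a - t)‖ ≤ 2 * K * h := by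
    rintro t ⟨ht0, hth⟩
    calc ‖deriv f (a + t) - deriv f (a - t)‖ ≤ K * |(a + t) - (a - t)| :=
          convex_univ.norm_image_sub_le_of_norm_deriv_le (fun t _ => hf' t) (fun t _ => hf'' t)
            (Set.mem_univ _) (Set.mem_univ _)
      _ = K * (2 * t) := by rw [show (a + t) - (a - t) = 2 * t by ring, abs_of_nonneg (by linarith)]
      _ ≤ 2 * K * h := by nlinarith
  have hmvt := norm_image_sub_le_of_norm_deriv_le_segment'
    (fun t _ => (hφ t).hasDerivWithinAt) hbound h (Set.right_mem_Icc.2 hh)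
  rw [add_zero, sub_zero, sub_zero, ← two_mul, Real.norm_eq_abs] at hmvt
  linarith

theorem abs_sum_range_succ_le_of_abs_add_reflect_le {u : ℕ → ℝ} {m : ℕ} {M : ℝ}
    (h : ∀ j ≤ m, |u j + u (m - j)| ≤ 2 * M) : |∑ j ∈ range (m + 1), u j| ≤ (m + 1) * M := by
  have hpair : 2 * ∑ j ∈ range (m + 1), u j = ∑ j ∈ range (m + 1), (u j + u (m - j)) := by
    have hreflect := sum_range_reflect u (m + 1)
    rw [Nat.add_sub_cancel] at hreflect
    rw [sum_add_distrib, hreflect]; ring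
  have htwice : |2 * ∑ j ∈ range (m + 1), u j| ≤ (m + 1) * (2 * M) :=
    calc |2 * ∑ j ∈ range (m + 1), u j| ≤ ∑ j ∈ range (m + 1), |u j + u (m - j)| :=
          hpair ▸ abs_sum_le_sum_abs _ _
      _ ≤ ∑ _j ∈ range (m + 1), 2 * M :=
          sum_le_sum fun j hj => h j (Nat.lt_succ_iff.mp (mem_range.mp hj))
      _ = (m + 1) * (2 * M) := by simp
  rw [abs_mul, abs_two] at htwice
  linarith

theorem abs_sub_symmetric_average_le {f : ℝ → ℝ} {K : ℝ} (hf : Differentiable ℝ f)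
    (hf' : Differentiable ℝ (deriv f)) (hf'' : ∀ t, |deriv (deriv f) t| ≤ K)
    (a δ : ℝ) (k : ℕ) :
    |f a - (∑ j ∈ range (2 * k + 1), f (a + (j - k) * δ)) / (2 * k + 1)| ≤ (k * δ) ^ 2 * K := by
  have hK : 0 ≤ K := (abs_nonneg _).trans (hf'' 0)
  set u : ℕ → ℝ := fun j => f (a + (j - k) * δ) - f a
  have hu : ∀ j ≤ 2 * k, |u j + u (2 * k - j)| ≤ 2 * ((k * δ) ^ 2 * K) := by
    intro j hj
    have hreflect : a + (((2 * k - j : ℕ) : ℝ) - k) * δ = a - (j - k) * δ := by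
      push_cast [Nat.cast_sub hj]; ring
    have hdist : ((j - k) * δ) ^ 2 ≤ (k * δ) ^ 2 := by
      have : (j : ℝ) ≤ 2 * k := by exact_mod_cast hj
      rw [mul_pow, mul_pow]
      exact mul_le_mul_of_nonneg_right (by nlinarith [(j.cast_nonneg : (0 : ℝ) ≤ j)]) (sq_nonneg δ)
    calc |u j + u (2 * k - j)|
        = |f (a + (j - k) * δ) + f (a - (j - k) * δ) - 2 * f a| := by
          simp only [u, hreflect]; ring_nf
      _ ≤ 2 * K * ((j - k) * δ) ^ 2 := abs_symmetric_second_difference_le hf hf' hf'' _ _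
      _ ≤ 2 * ((k * δ) ^ 2 * K) := by nlinarith
  have hsum := abs_sum_range_succ_le_of_abs_add_reflect_le hu
  have hc : (0 : ℝ) < 2 * k + 1 := by positivity
  rw [sum_sub_distrib, sum_const, card_range, nsmul_eq_mul] at hsum
  push_cast at hsum
  have hcenter : f a - (∑ j ∈ range (2 * k + 1), f (a + (j - k) * δ)) / (2 * k + 1) =
      -((∑ j ∈ range (2 * k + 1), f (a + (j - k) * δ) - (2 * k + 1) * f a) / (2 * k + 1)) := by
    rw [sub_div, mul_div_cancel_left₀ _ hc.ne', neg_sub]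
  rw [hcenter, abs_neg, abs_div, abs_of_pos hc, div_le_iff₀ hc]
  linarith

theorem abs_div_le_mul_sqrt_div {S s L c : ℝ} (hc : 0 < c) (h : |S| ≤ s * √L * √c) :
    |S / c| ≤ s * √(L / c) := by
  rw [Real.sqrt_div' L hc.le, abs_div, abs_of_pos hc, div_le_iff₀ hc]
  calc |S| ≤ s * √L * √c := h
    _ = s * (√L / √c) * c := by
      field_simp; rw [Real.sq_sqrt hc.le]

theorem stmt14_general (n i : ℕ)
    (σ K : ℝ) (y : ℕ → ℝ) (f : ℝ → ℝ)
    (hf1 : Differentiable ℝ f) (hf2 : Differentiable ℝ (deriv f))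
    (hbound : ∀ t : ℝ, |deriv (deriv f) t| ≤ K)
    (hA : ∀ k : ℕ, k ≤ i - 1 → k ≤ n - i →
      |∑ j ∈ Finset.range (2 * k + 1), (y (i - k + j) - f (((i : ℝ) - k + j) / n))| ≤
        σ * Real.sqrt (3 * Real.log n) * Real.sqrt (2 * (k : ℝ) + 1)) :
    ∀ k : ℕ, k ≤ i - 1 → k ≤ n - i →
      f ((i : ℝ) / n) ≥
        (∑ j ∈ Finset.range (2 * k + 1), y (i - k + j)) / (2 * (k : ℝ) + 1) -
          ((k : ℝ) / n) ^ 2 * K - σ * Real.sqrt (3 * Real.log n / (2 * (k : ℝ) + 1)) ∧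
      f ((i : ℝ) / n) ≤
        (∑ j ∈ Finset.range (2 * k + 1), y (i - k + j)) / (2 * (k : ℝ) + 1) +
          ((k : ℝ) / n) ^ 2 * K + σ * Real.sqrt (3 * Real.log n / (2 * (k : ℝ) + 1)) := by
  intro k hk1 hk2
  have hgrid : ∀ j : ℕ, i / n + (j - k) * (n : ℝ)⁻¹ = ((i : ℝ) - k + j) / n := fun j => by ring
  have hbias := abs_sub_symmetric_average_le hf1 hf2 hbound (i / n) (n : ℝ)⁻¹ k
  simp only [hgrid] at hbias
  rw [← div_eq_mul_inv] at hbias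
  have hnoise := abs_div_le_mul_sqrt_div (by positivity) (hA k hk1 hk2)
  rw [sum_sub_distrib, sub_div] at hnoise
  constructor <;> linarith [abs_le.mp hbias, abs_le.mp hnoise]

/-- fast smoothness bounds are honest: if `f` is twice differentiable with
`‖f''‖_∞ ≤ K` and `f ∈ A_n` (symmetric blocks of consecutive design points), then at each
design point `f(t_i)` lies between the fast lower and upper bounds for every admissible
half-width `k`. -/
theorem stmt14 (n i : ℕ) (hn : 2 ≤ n) (hi1 : 1 ≤ i) (hi2 : i ≤ n)
    (σ K : ℝ) (hσ : 0 < σ) (hK : 0 ≤ K) (y : ℕ → ℝ) (f : ℝ → ℝ)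
    (hf1 : Differentiable ℝ f) (hf2 : Differentiable ℝ (deriv f))
    (hbound : ∀ t : ℝ, |deriv (deriv f) t| ≤ K)
    (hA : ∀ k : ℕ, k ≤ i - 1 → k ≤ n - i →
      |∑ j ∈ Finset.range (2 * k + 1), (y (i - k + j) - f (((i : ℝ) - k + j) / n))| ≤
        σ * Real.sqrt (3 * Real.log n) * Real.sqrt (2 * (k : ℝ) + 1)) :
    ∀ k : ℕ, k ≤ i - 1 → k ≤ n - i →
      f ((i : ℝ) / n) ≥
        (∑ j ∈ Finset.range (2 * k + 1), y (i - k + j)) / (2 * (k : ℝ) + 1) -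
          ((k : ℝ) / n) ^ 2 * K - σ * Real.sqrt (3 * Real.log n / (2 * (k : ℝ) + 1)) ∧
      f ((i : ℝ) / n) ≤
        (∑ j ∈ Finset.range (2 * k + 1), y (i - k + j)) / (2 * (k : ℝ) + 1) +
          ((k : ℝ) / n) ^ 2 * K + σ * Real.sqrt (3 * Real.log n / (2 * (k : ℝ) + 1)) :=
  stmt14_general n i σ K y f hf1 hf2 hbound hA
end
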